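/- For a stochastic matrix G with all entries bounded below by δ > 0, any two stationary distributions coincide; moreover, for any probability vector π_0, ‖π_0 Gⁿ - π‖_1 ≤ (1 - mδ)ⁿ ‖π_0 - π‖_1, where π is the stationary distribution and m is the number of states. -/

import Mathlib

/-!
Doeblin's argument: if every entry of `G` is at least `δ`, then `G - δ J` (with `J` the all-ones
matrix) is nonnegative with row sums `1 - mδ`, and `J` annihilates vectors of total mass zero.
Hence `v ↦ vG` contracts the `ℓ¹` norm by `1 - mδ` on such vectors, in particular on `π₀ - π`;
iterating gives the geometric bound, and applied to `π' - π` for a second stationary `π'` it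
forces `π' = π` because `mδ > 0`.
-/

open Finset Matrix

/-- A stochastic matrix: nonnegative entries with each row summing to 1. -/
def IsStochastic {m : ℕ} (A : Matrix (Fin m) (Fin m) ℝ) : Prop :=
  (∀ x y, 0 ≤ A x y) ∧ ∀ x, ∑ y, A x y = 1

/-- A probability (row) vector: nonnegative entries summing to 1. -/
def IsProbVec {m : ℕ} (v : Fin m → ℝ) : Prop :=
  (∀ x, 0 ≤ v x) ∧ ∑ x, v x = 1

/-- The Google matrix G = g·A + (1-g)·K, where K has all entries 1/m. -/
noncomputable def googleMatrix {m : ℕ} (A : Matrix (Fin m) (Fin m) ℝ) (g : ℝ) :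
    Matrix (Fin m) (Fin m) ℝ :=
  g • A + (1 - g) • Matrix.of (fun _ _ : Fin m => (1 : ℝ) / m)

namespace Matrix

variable {ι : Type*} [Fintype ι]

theorem sum_vecMul_of_sum_row_eq_one {A : Matrix ι ι ℝ} (hrow : ∀ x, ∑ y, A x y = 1)
    (v : ι → ℝ) : ∑ y, vecMul v A y = ∑ x, v x := by
  simp only [vecMul, dotProduct]
  rw [Finset.sum_comm]
  simp only [← Finset.mul_sum, hrow, mul_one]

theorem vecMul_pow_eq_self [DecidableEq ι] {A : Matrix ι ι ℝ} {v : ι → ℝ} (hv : vecMul v A = v)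
    (n : ℕ) : vecMul v (A ^ n) = v := by
  induction n with
  | zero => exact vecMul_one v
  | succ n ih => rw [pow_succ, ← vecMul_vecMul, ih, hv]

theorem one_sub_card_mul_nonneg_of_le_entries {A : Matrix ι ι ℝ} {δ : ℝ}
    (hrow : ∀ x, ∑ y, A x y = 1) (hlb : ∀ x y, δ ≤ A x y) :
    0 ≤ 1 - Fintype.card ι * δ := by
  cases isEmpty_or_nonempty ι with
  | inl _ => simp
  | inr hne =>
    obtain ⟨x⟩ := hne
    have hsum : (Fintype.card ι : ℝ) * δ ≤ ∑ y, A x y := by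
      simpa using Finset.sum_le_sum fun y (_ : y ∈ univ) => hlb x y
    linarith [hrow x]

theorem sum_abs_vecMul_le_of_sum_eq_zero {A : Matrix ι ι ℝ} {δ : ℝ}
    (hrow : ∀ x, ∑ y, A x y = 1) (hlb : ∀ x y, δ ≤ A x y)
    {v : ι → ℝ} (hv : ∑ x, v x = 0) :
    ∑ y, |vecMul v A y| ≤ (1 - Fintype.card ι * δ) * ∑ x, |v x| := by
  have hshift : ∀ y, vecMul v A y = ∑ x, v x * (A x y - δ) := fun y => by
    simp only [vecMul, dotProduct, mul_sub, Finset.sum_sub_distrib, ← Finset.sum_mul, hv,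
      zero_mul, sub_zero]
  calc ∑ y, |vecMul v A y| ≤ ∑ y, ∑ x, |v x| * (A x y - δ) := by
        refine Finset.sum_le_sum fun y _ => ?_
        rw [hshift]
        refine (Finset.abs_sum_le_sum_abs _ _).trans_eq (Finset.sum_congr rfl fun x _ => ?_)
        rw [abs_mul, abs_of_nonneg (sub_nonneg.mpr (hlb x y))]
    _ = ∑ x, |v x| * (1 - Fintype.card ι * δ) := by
        rw [Finset.sum_comm]
        simp [← Finset.mul_sum, Finset.sum_sub_distrib, hrow]
    _ = (1 - Fintype.card ι * δ) * ∑ x, |v x| := by rw [Finset.mul_sum]; simp only [mul_comm]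

theorem sum_abs_vecMul_pow_le_of_sum_eq_zero [DecidableEq ι] {A : Matrix ι ι ℝ} {δ : ℝ}
    (hrow : ∀ x, ∑ y, A x y = 1) (hlb : ∀ x y, δ ≤ A x y)
    {v : ι → ℝ} (hv : ∑ x, v x = 0) (n : ℕ) :
    ∑ y, |vecMul v (A ^ n) y| ≤ (1 - Fintype.card ι * δ) ^ n * ∑ x, |v x| := by
  induction n generalizing v with
  | zero => simp
  | succ n ih =>
    have hmass : ∑ x, vecMul v A x = 0 := by rw [sum_vecMul_of_sum_row_eq_one hrow, hv]
    calc ∑ y, |vecMul v (A ^ (n + 1)) y|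
        = ∑ y, |vecMul (vecMul v A) (A ^ n) y| := by rw [pow_succ', vecMul_vecMul]
      _ ≤ (1 - Fintype.card ι * δ) ^ n * ∑ y, |vecMul v A y| := ih hmass
      _ ≤ (1 - Fintype.card ι * δ) ^ n * ((1 - Fintype.card ι * δ) * ∑ x, |v x|) :=
        mul_le_mul_of_nonneg_left (sum_abs_vecMul_le_of_sum_eq_zero hrow hlb hv)
          (pow_nonneg (one_sub_card_mul_nonneg_of_le_entries hrow hlb) n)
      _ = (1 - Fintype.card ι * δ) ^ (n + 1) * ∑ x, |v x| := by ring

theorem eq_zero_of_vecMul_eq_self_of_sum_eq_zero [Nonempty ι] {A : Matrix ι ι ℝ} {δ : ℝ}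
    (hδ : 0 < δ) (hrow : ∀ x, ∑ y, A x y = 1) (hlb : ∀ x y, δ ≤ A x y)
    {v : ι → ℝ} (hv : ∑ x, v x = 0) (hfix : vecMul v A = v) : v = 0 := by
  have hcontract := sum_abs_vecMul_le_of_sum_eq_zero hrow hlb hv
  rw [hfix] at hcontract
  have hcard : (0 : ℝ) < Fintype.card ι * δ := by positivity
  have hnorm : ∑ x, |v x| = 0 :=
    le_antisymm (by nlinarith) (Finset.sum_nonneg fun x _ => abs_nonneg (v x))
  funext x
  simpa using (Finset.sum_eq_zero_iff_of_nonneg fun x _ => abs_nonneg (v x)).mp hnorm x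
    (mem_univ x)

end Matrix

/-- a stochastic matrix with entries bounded below by δ > 0 has a unique
stationary distribution and iterates converge geometrically with rate 1 - mδ. -/
theorem doeblin_contraction {m : ℕ} (G : Matrix (Fin m) (Fin m) ℝ)
    (hG : IsStochastic G) (δ : ℝ) (hδ : 0 < δ) (hlb : ∀ x y, δ ≤ G x y)
    (π : Fin m → ℝ) (hπ : IsProbVec π) (hstat : Matrix.vecMul π G = π) :
    (∀ π' : Fin m → ℝ, IsProbVec π' → Matrix.vecMul π' G = π' → π' = π) ∧
      ∀ π₀ : Fin m → ℝ, IsProbVec π₀ → ∀ n : ℕ,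
        ∑ x, |Matrix.vecMul π₀ (G ^ n) x - π x|
          ≤ (1 - m * δ) ^ n * ∑ x, |π₀ x - π x| := by
  have hmass : ∀ π' : Fin m → ℝ, IsProbVec π' → ∑ x, (π' - π) x = 0 := fun π' hπ' => by
    simp only [Pi.sub_apply, Finset.sum_sub_distrib, hπ'.2, hπ.2, sub_self]
  refine ⟨fun π' hπ' hstat' => ?_, fun π₀ hπ₀ n => ?_⟩
  · have : Nonempty (Fin m) := by
      rcases isEmpty_or_nonempty (Fin m) with h | h
      · simpa using hπ.2
      · exact h
    refine sub_eq_zero.mp (eq_zero_of_vecMul_eq_self_of_sum_eq_zero hδ hG.2 hlb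
      (hmass π' hπ') ?_)
    rw [sub_vecMul, hstat, hstat']
  · have hdiff : vecMul π₀ (G ^ n) - π = vecMul (π₀ - π) (G ^ n) := by
      rw [sub_vecMul, vecMul_pow_eq_self hstat]
    simpa only [← Pi.sub_apply, hdiff, Fintype.card_fin] using
      sum_abs_vecMul_pow_le_of_sum_eq_zero hG.2 hlb (hmass π₀ hπ₀) n
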